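/- arXiv:1601.04738 — 8 statements merged into one kernel-verified Lean document; each statement's English description precedes it below -/
import Mathlib

section
/- Structural error recursion for sub-sampled Newton on a convex set: Let F : ℝᵖ → ℝ be twice continuously differentiable on an open convex set D containing a convex set X, with minimizer x* of F over X. Assume the Hessian of F is L-Lipschitz on the segment between any iterate and x* (in spectral norm), and let H be a symmetric matrix with λ_min(H) = μ > 0. If x⁺ = argmin over X of ⟨∇F(x), z − x⟩ + ½(z − x)ᵀ H (z − x), then ‖x⁺ − x*‖ ≤ (‖H − ∇²F(x)‖/μ)·‖x − x*‖ + (L/(2μ))·‖x − x*‖². -/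
/-!
With `e = x - x*` and `d = x⁺ - x*`, testing the variational inequality of `x⁺` at `x*` and that
of `x*` at `x⁺`, and using `⟪d, H d⟫ ≥ μ‖d‖²`, gives `μ‖d‖² ≤ ⟪H e - (∇F(x) - ∇F(x*)), d⟫`, so
`μ‖d‖ ≤ ‖(H - ∇²F(x)) e‖ + ‖∇F(x) - ∇F(x*) - ∇²F(x) e‖`. The last term is the first-order Taylor
remainder of `∇F` along `[x*, x]`, at most `L/2 ‖e‖²` because the Hessian is `L`-Lipschitz there.
-/

open scoped RealInnerProductSpace
open Set AffineMap

theorem norm_sub_sub_fderiv_le_of_lipschitz_segment {E F : Type*}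
    [NormedAddCommGroup E] [NormedSpace ℝ E] [NormedAddCommGroup F] [NormedSpace ℝ F]
    {g : E → F} {g' : E → E →L[ℝ] F} {a b : E} {L : ℝ}
    (hg : ∀ u ∈ segment ℝ a b, HasFDerivAt g (g' u) u)
    (hlip : ∀ u ∈ segment ℝ a b, ‖g' b - g' u‖ ≤ L * ‖b - u‖) :
    ‖g b - g a - g' b (b - a)‖ ≤ L / 2 * ‖b - a‖ ^ 2 := by
  set f : ℝ → F := fun t => g (lineMap a b t) - g a - t • g' b (b - a)
  have hseg : ∀ t ∈ Icc (0 : ℝ) 1, lineMap a b t ∈ segment ℝ a b := fun t ht =>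
    segment_eq_image_lineMap ℝ a b ▸ mem_image_of_mem _ ht
  have hf : ∀ t ∈ Icc (0 : ℝ) 1,
      HasDerivAt f (g' (lineMap a b t) (b - a) - g' b (b - a)) t := fun t ht =>
    (((hg _ (hseg t ht)).comp_hasDerivAt t hasDerivAt_lineMap).sub_const (g a)).sub
      ((hasDerivAt_id t).smul_const (g' b (b - a)) |>.congr_deriv (one_smul ℝ _))
  have hB : ∀ t, HasDerivAt (fun t : ℝ => L * ‖b - a‖ ^ 2 * (t - t ^ 2 / 2))
      (L * ‖b - a‖ ^ 2 * (1 - t)) t := fun t =>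
    (((hasDerivAt_id' t).sub ((hasDerivAt_pow 2 t).div_const 2)).const_mul
      (L * ‖b - a‖ ^ 2)).congr_deriv (by push_cast; ring)
  have hbound : ∀ t ∈ Ico (0 : ℝ) 1,
      ‖g' (lineMap a b t) (b - a) - g' b (b - a)‖ ≤ L * ‖b - a‖ ^ 2 * (1 - t) := by
    intro t ht
    have hdist : ‖b - lineMap a b t‖ = (1 - t) * ‖b - a‖ := by
      rw [← vsub_eq_sub, right_vsub_lineMap, norm_smul, Real.norm_of_nonneg (by linarith [ht.2]),
        vsub_eq_sub]
    calc ‖g' (lineMap a b t) (b - a) - g' b (b - a)‖ = ‖(g' b - g' (lineMap a b t)) (b - a)‖ := by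
          rw [← norm_neg]; simp
      _ ≤ ‖g' b - g' (lineMap a b t)‖ * ‖b - a‖ := ContinuousLinearMap.le_opNorm _ _
      _ ≤ L * ((1 - t) * ‖b - a‖) * ‖b - a‖ := by
          rw [← hdist]; gcongr; exact hlip _ (hseg t (Ico_subset_Icc_self ht))
      _ = L * ‖b - a‖ ^ 2 * (1 - t) := by ring
  have := image_norm_le_of_norm_deriv_right_le_deriv_boundary
    (fun t ht => (hf t ht).continuousAt.continuousWithinAt)
    (fun t ht => (hf t (Ico_subset_Icc_self ht)).hasDerivWithinAt) (by simp [f]) hB hbound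
    (right_mem_Icc.2 zero_le_one)
  simpa [f, one_smul] using this.trans_eq (by ring)

theorem mul_norm_sub_le_of_variational_inequalities {E : Type*}
    [NormedAddCommGroup E] [InnerProductSpace ℝ E]
    {H : E →L[ℝ] E} {μ : ℝ} (hH : ∀ v, μ * ‖v‖ ^ 2 ≤ ⟪v, H v⟫)
    {g gstar x xstar xplus : E}
    (hstar : 0 ≤ ⟪gstar, xplus - xstar⟫)
    (hplus : 0 ≤ ⟪g + H (xplus - x), xstar - xplus⟫) :
    μ * ‖xplus - xstar‖ ≤ ‖H (x - xstar) - (g - gstar)‖ := by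
  set d := xplus - xstar
  have hinner : μ * ‖d‖ ^ 2 ≤ ⟪H (x - xstar) - (g - gstar), d⟫ := by
    have hsplit : H d = H (xplus - x) + H (x - xstar) := by
      rw [← map_add, sub_add_sub_cancel]
    have hneg : xstar - xplus = -d := (neg_sub _ _).symm
    rw [hneg, inner_neg_right, inner_add_left] at hplus
    have hcoercive := hH d
    rw [hsplit, inner_add_right, real_inner_comm _ d, real_inner_comm _ d] at hcoercive
    rw [inner_sub_left, inner_sub_left]
    linarith
  rcases (norm_nonneg d).eq_or_lt with hd | hd
  · rw [← hd, mul_zero]; exact norm_nonneg _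
  · refine le_of_mul_le_mul_right ?_ hd
    calc μ * ‖d‖ * ‖d‖ = μ * ‖d‖ ^ 2 := by ring
      _ ≤ _ := hinner.trans (real_inner_le_norm _ _)

theorem structural_error_recursion_general {p : ℕ}
    (D X : Set (EuclideanSpace ℝ (Fin p)))
    (hXconv : Convex ℝ X) (hXD : X ⊆ D)
    (gradF : EuclideanSpace ℝ (Fin p) → EuclideanSpace ℝ (Fin p))
    (hessF : EuclideanSpace ℝ (Fin p) →
      (EuclideanSpace ℝ (Fin p) →L[ℝ] EuclideanSpace ℝ (Fin p)))
    (hhess : ∀ u ∈ D, HasFDerivAt gradF (hessF u) u)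
    (xstar x xplus : EuclideanSpace ℝ (Fin p))
    (hxstarX : xstar ∈ X) (hxX : x ∈ X) (hxplusX : xplus ∈ X)
    (L μ : ℝ) (hμ : 0 < μ)
    (hlip : ∀ u ∈ segment ℝ xstar x, ∀ v ∈ segment ℝ xstar x,
      ‖hessF u - hessF v‖ ≤ L * ‖u - v‖)
    (H : EuclideanSpace ℝ (Fin p) →L[ℝ] EuclideanSpace ℝ (Fin p))
    (hHmin : ∀ v, μ * ‖v‖ ^ 2 ≤ ⟪v, H v⟫)
    (hVIstar : ∀ z ∈ X, 0 ≤ ⟪gradF xstar, z - xstar⟫)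
    (hVI : ∀ z ∈ X, 0 ≤ ⟪gradF x + H (xplus - x), z - xplus⟫) :
    ‖xplus - xstar‖ ≤
      (‖H - hessF x‖ / μ) * ‖x - xstar‖ + (L / (2 * μ)) * ‖x - xstar‖ ^ 2 := by
  have hseg : segment ℝ xstar x ⊆ D := (hXconv.segment_subset hxstarX hxX).trans hXD
  have htaylor := norm_sub_sub_fderiv_le_of_lipschitz_segment (fun u hu => hhess u (hseg hu))
    (fun u hu => hlip x (right_mem_segment ℝ xstar x) u hu)
  have hcontract := mul_norm_sub_le_of_variational_inequalities hHmin
    (hVIstar xplus hxplusX) (hVI xstar hxstarX)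
  have hsplit : H (x - xstar) - (gradF x - gradF xstar) = (H - hessF x) (x - xstar) -
      (gradF x - gradF xstar - hessF x (x - xstar)) := by
    rw [sub_apply]; abel
  calc ‖xplus - xstar‖ ≤ ‖H (x - xstar) - (gradF x - gradF xstar)‖ / μ :=
        (le_div_iff₀' hμ).2 hcontract
    _ ≤ (‖H - hessF x‖ * ‖x - xstar‖ + L / 2 * ‖x - xstar‖ ^ 2) / μ := by
        rw [hsplit]
        gcongr
        exact (norm_sub_le _ _).trans (add_le_add ((H - hessF x).le_opNorm _) htaylor)
    _ = _ := by ring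

/-- Structural error recursion for sub-sampled Newton on a convex set. -/
theorem structural_error_recursion {p : ℕ}
    (D X : Set (EuclideanSpace ℝ (Fin p)))
    (hD : IsOpen D) (hDconv : Convex ℝ D) (hXconv : Convex ℝ X) (hXD : X ⊆ D)
    (F : EuclideanSpace ℝ (Fin p) → ℝ)
    (gradF : EuclideanSpace ℝ (Fin p) → EuclideanSpace ℝ (Fin p))
    (hessF : EuclideanSpace ℝ (Fin p) →
      (EuclideanSpace ℝ (Fin p) →L[ℝ] EuclideanSpace ℝ (Fin p)))
    (hgrad : ∀ u ∈ D, HasGradientAt F (gradF u) u)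
    (hhess : ∀ u ∈ D, HasFDerivAt gradF (hessF u) u)
    (hhessCont : ContinuousOn hessF D)
    (xstar x xplus : EuclideanSpace ℝ (Fin p))
    (hxstarX : xstar ∈ X) (hxX : x ∈ X) (hxplusX : xplus ∈ X)
    (hmin : ∀ z ∈ X, F xstar ≤ F z)
    (L μ : ℝ) (hL : 0 ≤ L) (hμ : 0 < μ)
    (hlip : ∀ u ∈ segment ℝ xstar x, ∀ v ∈ segment ℝ xstar x,
      ‖hessF u - hessF v‖ ≤ L * ‖u - v‖)
    (H : EuclideanSpace ℝ (Fin p) →L[ℝ] EuclideanSpace ℝ (Fin p))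
    (hHsym : ∀ u v, ⟪H u, v⟫ = ⟪u, H v⟫)
    (hHmin : ∀ v, μ * ‖v‖ ^ 2 ≤ ⟪v, H v⟫)
    (hVIstar : ∀ z ∈ X, 0 ≤ ⟪gradF xstar, z - xstar⟫)
    (hVI : ∀ z ∈ X, 0 ≤ ⟪gradF x + H (xplus - x), z - xplus⟫) :
    ‖xplus - xstar‖ ≤
      (‖H - hessF x‖ / μ) * ‖x - xstar‖ + (L / (2 * μ)) * ‖x - xstar‖ ^ 2 :=
  structural_error_recursion_general D X hXconv hXD gradF hessF hhess xstar x xplus hxstarX hxX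
    hxplusX L μ hμ hlip H hHmin hVIstar hVI
end

section
/- Error recursion with inexact gradient: Under the setting of the previous structural lemma, if instead x⁺ = argmin over X of ⟨g, z − x⟩ + ½(z − x)ᵀ H (z − x) for some vector g, then ‖x⁺ − x*‖ ≤ ‖∇F(x) − g‖/μ + (‖H − ∇²F(x)‖/μ)·‖x − x*‖ + (L/(2μ))·‖x − x*‖². -/
/-!
Subtracting the two variational inequalities, tested at each other's solution, and using
`μ`-coercivity of `H` gives `‖x⁺ - x*‖ ≤ ‖∇F(x*) - g + H (x - x*)‖ / μ`. Splitting
`∇F(x*) - g + H (x - x*)` as the gradient error `∇F(x) - g`, the Hessian error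
`(H - ∇²F(x)) (x - x*)` and the second-order Taylor remainder of `∇F` between `x` and `x*`,
the last is at most `L/2 ‖x - x*‖²` because `∇²F` is `L`-Lipschitz on that segment.
-/

open scoped RealInnerProductSpace

theorem norm_sub_sub_fderiv_le_of_lipschitz_fderiv_on_segment {E F : Type*}
    [NormedAddCommGroup E] [NormedSpace ℝ E] [NormedAddCommGroup F] [NormedSpace ℝ F]
    {f : E → F} {f' : E → E →L[ℝ] F} {x y : E} {L : ℝ}
    (hf : ∀ u ∈ segment ℝ x y, HasFDerivAt f (f' u) u)
    (hlip : ∀ u ∈ segment ℝ x y, ‖f' u - f' x‖ ≤ L * ‖u - x‖) :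
    ‖f y - f x - f' x (y - x)‖ ≤ L / 2 * ‖y - x‖ ^ 2 := by
  set v := y - x
  have hmem : ∀ t ∈ Set.Icc (0 : ℝ) 1, x + t • v ∈ segment ℝ x y := fun t ht =>
    segment_eq_image' ℝ x y ▸ Set.mem_image_of_mem _ ht
  have hderiv : ∀ t ∈ Set.Icc (0 : ℝ) 1,
      HasDerivAt (fun t : ℝ => f (x + t • v) - f x - t • f' x v) ((f' (x + t • v) - f' x) v) t := by
    intro t ht
    have hline : HasDerivAt (fun t : ℝ => x + t • v) v t := by
      simpa using ((hasDerivAt_id t).smul_const v).const_add x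
    have h := (((hf _ (hmem t ht)).comp_hasDerivAt t hline).sub_const (f x)).sub
      ((hasDerivAt_id t).smul_const (f' x v))
    rwa [one_smul, ← sub_apply] at h
  have hbound : ∀ t ∈ Set.Ico (0 : ℝ) 1, ‖(f' (x + t • v) - f' x) v‖ ≤ L * t * ‖v‖ ^ 2 := by
    intro t ht
    calc ‖(f' (x + t • v) - f' x) v‖ ≤ ‖f' (x + t • v) - f' x‖ * ‖v‖ :=
          ContinuousLinearMap.le_opNorm _ _
      _ ≤ L * ‖x + t • v - x‖ * ‖v‖ := by
        gcongr; exact hlip _ (hmem t (Set.Ico_subset_Icc_self ht))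
      _ = L * t * ‖v‖ ^ 2 := by
        rw [add_sub_cancel_left, norm_smul, Real.norm_of_nonneg ht.1]; ring
  -- The remainder along the segment is fenced by `L t² ‖v‖² / 2`, which vanishes at `t = 0`.
  have hB : ∀ t : ℝ, HasDerivAt (fun t => L / 2 * t ^ 2 * ‖v‖ ^ 2) (L * t * ‖v‖ ^ 2) t :=
    fun t => (((hasDerivAt_pow 2 t).const_mul (L / 2)).mul_const (‖v‖ ^ 2)).congr_deriv
      (by ring)
  have hfence := image_norm_le_of_norm_deriv_right_le_deriv_boundary
    (fun t ht => (hderiv t ht).continuousAt.continuousWithinAt)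
    (fun t ht => (hderiv t (Set.Ico_subset_Icc_self ht)).hasDerivWithinAt)
    (by simp) hB hbound (Set.right_mem_Icc.2 zero_le_one)
  simpa [v] using hfence

theorem norm_le_div_of_mul_norm_sq_le_inner {E : Type*} [NormedAddCommGroup E]
    [InnerProductSpace ℝ E] {μ : ℝ} (hμ : 0 < μ) {w e : E} (h : μ * ‖e‖ ^ 2 ≤ ⟪w, e⟫) :
    ‖e‖ ≤ ‖w‖ / μ := by
  rw [le_div_iff₀ hμ]
  rcases (norm_nonneg e).eq_or_lt with he | he
  · rw [← he, zero_mul]; exact norm_nonneg w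
  · refine le_of_mul_le_mul_right ?_ he
    calc ‖e‖ * μ * ‖e‖ = μ * ‖e‖ ^ 2 := by ring
      _ ≤ ⟪w, e⟫ := h
      _ ≤ ‖w‖ * ‖e‖ := real_inner_le_norm w e

theorem norm_sub_le_of_variational_inequalities {E : Type*} [NormedAddCommGroup E]
    [InnerProductSpace ℝ E] {X : Set E} {H : E →L[ℝ] E} {μ : ℝ} (hμ : 0 < μ)
    (hH : ∀ v, μ * ‖v‖ ^ 2 ≤ ⟪v, H v⟫) {a g x xstar xplus : E}
    (hxstar : xstar ∈ X) (hxplus : xplus ∈ X)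
    (hVIstar : ∀ z ∈ X, 0 ≤ ⟪a, z - xstar⟫)
    (hVI : ∀ z ∈ X, 0 ≤ ⟪g + H (xplus - x), z - xplus⟫) :
    ‖xplus - xstar‖ ≤ ‖a - g + H (x - xstar)‖ / μ := by
  refine norm_le_div_of_mul_norm_sq_le_inner hμ ?_
  set e := xplus - xstar
  have hstar : 0 ≤ ⟪a, e⟫ := hVIstar xplus hxplus
  have hplus : ⟪g + H (xplus - x), e⟫ ≤ 0 := by
    have := hVI xstar hxstar
    rwa [← neg_sub xplus xstar, inner_neg_right, neg_nonneg] at this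
  have hsplit : xplus - x = e - (x - xstar) := (sub_sub_sub_cancel_right xplus x xstar).symm
  have hidentity : ⟪a - g + H (x - xstar), e⟫ = ⟪a, e⟫ - ⟪g + H (xplus - x), e⟫ + ⟪e, H e⟫ := by
    rw [hsplit, map_sub H e, real_inner_comm (H e) e]
    simp only [inner_add_left, inner_sub_left]
    ring
  linarith [hH e]

theorem structural_error_recursion_inexact_gradient_general {p : ℕ}
    (D X : Set (EuclideanSpace ℝ (Fin p)))
    (hXconv : Convex ℝ X) (hXD : X ⊆ D)
    (gradF : EuclideanSpace ℝ (Fin p) → EuclideanSpace ℝ (Fin p))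
    (hessF : EuclideanSpace ℝ (Fin p) →
      (EuclideanSpace ℝ (Fin p) →L[ℝ] EuclideanSpace ℝ (Fin p)))
    (hhess : ∀ u ∈ D, HasFDerivAt gradF (hessF u) u)
    (xstar x xplus : EuclideanSpace ℝ (Fin p))
    (g : EuclideanSpace ℝ (Fin p))
    (hxstarX : xstar ∈ X) (hxX : x ∈ X) (hxplusX : xplus ∈ X)
    (L μ : ℝ) (hμ : 0 < μ)
    (hlip : ∀ u ∈ segment ℝ xstar x, ∀ v ∈ segment ℝ xstar x,
      ‖hessF u - hessF v‖ ≤ L * ‖u - v‖)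
    (H : EuclideanSpace ℝ (Fin p) →L[ℝ] EuclideanSpace ℝ (Fin p))
    (hHmin : ∀ v, μ * ‖v‖ ^ 2 ≤ ⟪v, H v⟫)
    (hVIstar : ∀ z ∈ X, 0 ≤ ⟪gradF xstar, z - xstar⟫)
    (hVI : ∀ z ∈ X, 0 ≤ ⟪g + H (xplus - x), z - xplus⟫) :
    ‖xplus - xstar‖ ≤ ‖gradF x - g‖ / μ +
      (‖H - hessF x‖ / μ) * ‖x - xstar‖ + (L / (2 * μ)) * ‖x - xstar‖ ^ 2 := by
  have hseg : segment ℝ x xstar ⊆ D := (hXconv.segment_subset hxX hxstarX).trans hXD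
  have htaylor : ‖gradF xstar - gradF x - hessF x (xstar - x)‖ ≤ L / 2 * ‖x - xstar‖ ^ 2 := by
    rw [norm_sub_rev x xstar]
    exact norm_sub_sub_fderiv_le_of_lipschitz_fderiv_on_segment (fun u hu => hhess u (hseg hu))
      fun u hu => hlip u (segment_symm ℝ x xstar ▸ hu) x (right_mem_segment ℝ xstar x)
  have hdecomp : gradF xstar - g + H (x - xstar) = (gradF x - g) + (H - hessF x) (x - xstar) +
      (gradF xstar - gradF x - hessF x (xstar - x)) := by
    rw [sub_apply, ← neg_sub x xstar, map_neg]
    abel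
  calc ‖xplus - xstar‖ ≤ ‖gradF xstar - g + H (x - xstar)‖ / μ :=
        norm_sub_le_of_variational_inequalities hμ hHmin hxstarX hxplusX hVIstar hVI
    _ ≤ (‖gradF x - g‖ + ‖H - hessF x‖ * ‖x - xstar‖ + L / 2 * ‖x - xstar‖ ^ 2) / μ := by
        rw [hdecomp]
        gcongr
        exact (norm_add₃_le ..).trans
          (add_le_add_three le_rfl ((H - hessF x).le_opNorm _) htaylor)
    _ = _ := by ring

/-- Error recursion with inexact gradient: the structural lemma where the update uses an
approximate gradient `g` in place of `∇F(x)`. -/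
theorem structural_error_recursion_inexact_gradient {p : ℕ}
    (D X : Set (EuclideanSpace ℝ (Fin p)))
    (hD : IsOpen D) (hDconv : Convex ℝ D) (hXconv : Convex ℝ X) (hXD : X ⊆ D)
    (F : EuclideanSpace ℝ (Fin p) → ℝ)
    (gradF : EuclideanSpace ℝ (Fin p) → EuclideanSpace ℝ (Fin p))
    (hessF : EuclideanSpace ℝ (Fin p) →
      (EuclideanSpace ℝ (Fin p) →L[ℝ] EuclideanSpace ℝ (Fin p)))
    (hgrad : ∀ u ∈ D, HasGradientAt F (gradF u) u)
    (hhess : ∀ u ∈ D, HasFDerivAt gradF (hessF u) u)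
    (hhessCont : ContinuousOn hessF D)
    (xstar x xplus : EuclideanSpace ℝ (Fin p))
    (g : EuclideanSpace ℝ (Fin p))
    (hxstarX : xstar ∈ X) (hxX : x ∈ X) (hxplusX : xplus ∈ X)
    (hmin : ∀ z ∈ X, F xstar ≤ F z)
    (L μ : ℝ) (hL : 0 ≤ L) (hμ : 0 < μ)
    (hlip : ∀ u ∈ segment ℝ xstar x, ∀ v ∈ segment ℝ xstar x,
      ‖hessF u - hessF v‖ ≤ L * ‖u - v‖)
    (H : EuclideanSpace ℝ (Fin p) →L[ℝ] EuclideanSpace ℝ (Fin p))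
    (hHsym : ∀ u v, ⟪H u, v⟫ = ⟪u, H v⟫)
    (hHmin : ∀ v, μ * ‖v‖ ^ 2 ≤ ⟪v, H v⟫)
    (hVIstar : ∀ z ∈ X, 0 ≤ ⟪gradF xstar, z - xstar⟫)
    (hVI : ∀ z ∈ X, 0 ≤ ⟪g + H (xplus - x), z - xplus⟫) :
    ‖xplus - xstar‖ ≤ ‖gradF x - g‖ / μ +
      (‖H - hessF x‖ / μ) * ‖x - xstar‖ + (L / (2 * μ)) * ‖x - xstar‖ ^ 2 :=
  structural_error_recursion_inexact_gradient_general D X hXconv hXD gradF hessF hhess xstar x xplus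
    g hxstarX hxX hxplusX L μ hμ hlip H hHmin hVIstar hVI
end

section
/- Q-superlinear convergence with geometrically decaying linear factor: let 0 < ρ₀ < ρ < 1 and ξ > 0, and suppose ‖xₖ₊₁ − x*‖ ≤ ρᵏρ₀‖xₖ − x*‖ + ξ‖xₖ − x*‖² for all k ≥ 0, with ‖x₀ − x*‖ ≤ (ρ − ρ₀)/ξ. Then ‖xₖ₊₁ − x*‖ ≤ ρᵏ⁺¹‖xₖ − x*‖ for all k ≥ 0; in particular (xₖ) converges Q-superlinearly to x*. -/
/-- Q-superlinear convergence with a geometrically decaying linear factor. -/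
theorem q_superlinear_convergence_geometric {p : ℕ} (x : ℕ → EuclideanSpace ℝ (Fin p))
    (xstar : EuclideanSpace ℝ (Fin p)) (ρ₀ ρ ξ : ℝ)
    (hρ₀ : 0 < ρ₀) (hρ₀ρ : ρ₀ < ρ) (hρ : ρ < 1) (hξ : 0 < ξ)
    (hrec : ∀ k : ℕ,
      ‖x (k + 1) - xstar‖ ≤ ρ ^ k * ρ₀ * ‖x k - xstar‖ + ξ * ‖x k - xstar‖ ^ 2)
    (h0 : ‖x 0 - xstar‖ ≤ (ρ - ρ₀) / ξ) :
    ∀ k : ℕ, ‖x (k + 1) - xstar‖ ≤ ρ ^ (k + 1) * ‖x k - xstar‖ := by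
  have hρpos : 0 < ρ := hρ₀.trans hρ₀ρ
  have hρk : ∀ k : ℕ, (0:ℝ) < ρ ^ k := fun k => pow_pos hρpos k
  have hρk1 : ∀ k : ℕ, ρ ^ k ≤ 1 := fun k => pow_le_one₀ hρpos.le hρ.le
  -- key: step from the bound eₖ ≤ ρᵏ(ρ-ρ₀)/ξ
  have step : ∀ k : ℕ, ‖x k - xstar‖ ≤ ρ ^ k * ((ρ - ρ₀) / ξ) →
      ‖x (k + 1) - xstar‖ ≤ ρ ^ (k + 1) * ‖x k - xstar‖ := by
    intro k hk
    have hnn : (0:ℝ) ≤ ‖x k - xstar‖ := norm_nonneg _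
    calc ‖x (k + 1) - xstar‖
        ≤ ρ ^ k * ρ₀ * ‖x k - xstar‖ + ξ * ‖x k - xstar‖ ^ 2 := hrec k
      _ ≤ ρ ^ k * ρ₀ * ‖x k - xstar‖ + ξ * ((ρ ^ k * ((ρ - ρ₀) / ξ)) * ‖x k - xstar‖) := by
          gcongr
          rw [sq]
          exact mul_le_mul_of_nonneg_right hk hnn
      _ = ρ ^ (k + 1) * ‖x k - xstar‖ := by
          field_simp
          ring
  -- the invariant bound
  have bound : ∀ k : ℕ, ‖x k - xstar‖ ≤ ρ ^ k * ((ρ - ρ₀) / ξ) := by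
    intro k
    induction k with
    | zero => simpa using h0
    | succ n ih =>
        have h1 := step n ih
        calc ‖x (n + 1) - xstar‖ ≤ ρ ^ (n + 1) * ‖x n - xstar‖ := h1
          _ ≤ ρ ^ (n + 1) * (ρ ^ n * ((ρ - ρ₀) / ξ)) := by gcongr
          _ ≤ ρ ^ (n + 1) * (1 * ((ρ - ρ₀) / ξ)) := by
              have : (0:ℝ) ≤ (ρ - ρ₀) / ξ := div_nonneg (by linarith) hξ.le
              gcongr
              exact hρk1 n
          _ = ρ ^ (n + 1) * ((ρ - ρ₀) / ξ) := by ring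
  exact fun k => step k (bound k)
end

section
/- Q-superlinear convergence with logarithmic accuracy growth: suppose a nonnegative real sequence dₖ satisfies dₖ₊₁ ≤ dₖ/(2·ln(4+k)) + ξ·dₖ² for all k ≥ 0, where ξ > 0, and suppose d₀ ≤ 1/((1 + 4·ln 2)·ξ). Then for all k ≥ 1, dₖ ≤ dₖ₋₁ / ln(3+k). -/
/-- Q-superlinear convergence with logarithmic accuracy growth. -/
theorem q_superlinear_convergence_log (d : ℕ → ℝ) (ξ : ℝ) (hξ : 0 < ξ)
    (hd : ∀ k, 0 ≤ d k)
    (hrec : ∀ k : ℕ, d (k + 1) ≤ d k / (2 * Real.log (4 + (k : ℝ))) + ξ * d k ^ 2)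
    (h0 : d 0 ≤ 1 / ((1 + 4 * Real.log 2) * ξ)) :
    ∀ k : ℕ, 1 ≤ k → d k ≤ d (k - 1) / Real.log (3 + (k : ℝ)) := by
  have hlog2 : (0.6931471803 : ℝ) < Real.log 2 := Real.log_two_gt_d9
  set A : ℝ := 1 + 4 * Real.log 2 with hA
  have hApos : 0 < A := by positivity
  set m : ℕ → ℝ := fun k => if k = 0 then 1 else Real.log (3 + (k : ℝ)) with hm
  have he3 : Real.exp 1 ≤ 3 := by
    have := Real.exp_one_lt_d9; linarith
  have hm1 : ∀ k, 1 ≤ m k := by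
    intro k
    simp only [hm]
    split
    · exact le_rfl
    · rename_i hk
      rw [Real.le_log_iff_exp_le (by positivity)]
      have : (1:ℝ) ≤ (k:ℝ) := by
        exact_mod_cast Nat.one_le_iff_ne_zero.mpr hk
      linarith
  have hmpos : ∀ k, 0 < m k := fun k => lt_of_lt_of_le one_pos (hm1 k)
  -- key inequality : 2 log(4+k) ≤ A * m k
  have hkey : ∀ k : ℕ, 2 * Real.log (4 + (k:ℝ)) ≤ A * m k := by
    intro k
    rcases Nat.eq_zero_or_pos k with hk | hk
    · subst hk
      simp only [hm, if_pos rfl, Nat.cast_zero, add_zero, mul_one]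
      have : Real.log 4 = 2 * Real.log 2 := by
        rw [show (4:ℝ) = 2 ^ 2 by norm_num, Real.log_pow]; push_cast; ring
      rw [this]; linarith
    · have hk0 : k ≠ 0 := Nat.pos_iff_ne_zero.mp hk
      simp only [hm, if_neg hk0]
      have h1 : Real.log (4 + (k:ℝ)) ≤ Real.log (3 + (k:ℝ)) + Real.log (4/3) := by
        rw [← Real.log_mul (by positivity) (by norm_num)]
        apply Real.log_le_log (by positivity)
        have : (0:ℝ) ≤ (k:ℝ) := Nat.cast_nonneg k
        nlinarith
      have h2 : Real.log (4/3 : ℝ) ≤ 1/3 := by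
        have := Real.log_le_sub_one_of_pos (show (0:ℝ) < 4/3 by norm_num)
        linarith
      have h3 : (1:ℝ) ≤ Real.log (3 + (k:ℝ)) := by
        have := hm1 k; simpa [hm, hk0] using this
      nlinarith
  -- bound: d k ≤ 1/(A ξ m k), and step: d (k+1) ≤ d k / log (4+k)
  have step : ∀ k : ℕ, d k ≤ 1 / (A * ξ * m k) →
      d (k+1) ≤ d k / Real.log (4 + (k:ℝ)) := by
    intro k hb
    set L : ℝ := Real.log (4 + (k:ℝ)) with hL
    have hLpos : 0 < L := by
      apply Real.log_pos
      have : (0:ℝ) ≤ (k:ℝ) := Nat.cast_nonneg k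
      linarith
    have hξd : ξ * d k ≤ 1 / (A * m k) := by
      have h : ξ * d k ≤ ξ * (1 / (A * ξ * m k)) := by
        apply mul_le_mul_of_nonneg_left hb hξ.le
      have hp1 : (0:ℝ) < A * ξ * m k := mul_pos (mul_pos hApos hξ) (hmpos k)
      have hp2 : (0:ℝ) < A * m k := mul_pos hApos (hmpos k)
      calc ξ * d k ≤ ξ * (1 / (A * ξ * m k)) := h
        _ = 1 / (A * m k) := by
            rw [mul_one_div, div_eq_div_iff hp1.ne' hp2.ne']; ring
    have h2 : ξ * d k ^ 2 ≤ d k / (2 * L) := by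
      have : ξ * d k ^ 2 = (ξ * d k) * d k := by ring
      rw [this]
      have hle : (ξ * d k) * d k ≤ (1 / (A * m k)) * d k :=
        mul_le_mul_of_nonneg_right hξd (hd k)
      have hAm : 2 * L ≤ A * m k := hkey k
      have h1 : 1 / (A * m k) ≤ 1 / (2 * L) := by
        apply one_div_le_one_div_of_le (by positivity) hAm
      calc (ξ * d k) * d k ≤ (1 / (A * m k)) * d k := hle
        _ ≤ (1 / (2 * L)) * d k := mul_le_mul_of_nonneg_right h1 (hd k)
        _ = d k / (2 * L) := by ring
    have := hrec k
    have : d (k+1) ≤ d k / (2 * L) + d k / (2 * L) := by linarith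
    calc d (k+1) ≤ d k / (2 * L) + d k / (2 * L) := this
      _ = d k / L := by field_simp; ring
  have bnd : ∀ k : ℕ, d k ≤ 1 / (A * ξ * m k) := by
    intro k
    induction k with
    | zero => simpa [hm] using h0
    | succ n ih =>
      have hs := step n ih
      have hLpos : 0 < Real.log (4 + (n:ℝ)) := by
        apply Real.log_pos
        have : (0:ℝ) ≤ (n:ℝ) := Nat.cast_nonneg n
        linarith
      have hmn1 : m (n+1) = Real.log (4 + (n:ℝ)) := by
        simp only [hm, if_neg (Nat.succ_ne_zero n)]
        push_cast; ring_nf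
      rw [hmn1]
      have h1 : d n / Real.log (4 + (n:ℝ)) ≤ (1 / (A * ξ * m n)) / Real.log (4 + (n:ℝ)) := by
        gcongr
      have h2 : (1 / (A * ξ * m n)) / Real.log (4 + (n:ℝ)) ≤ 1 / (A * ξ * Real.log (4 + (n:ℝ))) := by
        rw [div_div]
        apply one_div_le_one_div_of_le (mul_pos (mul_pos hApos hξ) hLpos)
        nlinarith [mul_nonneg (mul_pos (mul_pos hApos hξ) hLpos).le
          (sub_nonneg.mpr (hm1 n))]
      linarith
  intro k hk
  obtain ⟨j, rfl⟩ : ∃ j, k = j + 1 := ⟨k - 1, (Nat.succ_pred_eq_of_pos hk).symm⟩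
  have hs := step j (bnd j)
  have : (3 : ℝ) + ((j+1 : ℕ) : ℝ) = 4 + (j:ℝ) := by push_cast; ring
  rw [Nat.add_sub_cancel, this]
  exact hs
end

section
/- R-linear convergence with inexact gradients: let 0 < ρ < 1, ρ₀ > 0, ρ₁ > 0 with ρ₀ + ρ₁ < ρ, ξ > 0, and set σ = (ρ − (ρ₀ + ρ₁))/ξ. Suppose a nonnegative sequence dₖ satisfies dₖ₊₁ ≤ ρᵏρ₁σ + ρ₀dₖ + ξdₖ² for all k ≥ 0, and d₀ ≤ σ. Then dₖ ≤ ρᵏσ for all k ≥ 0. -/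
/-- R-linear convergence with inexact gradients. -/
theorem r_linear_convergence_inexact_gradient (d : ℕ → ℝ) (ρ ρ₀ ρ₁ ξ σ : ℝ)
    (hρpos : 0 < ρ) (hρ : ρ < 1) (hρ₀ : 0 < ρ₀) (hρ₁ : 0 < ρ₁)
    (hsum : ρ₀ + ρ₁ < ρ) (hξ : 0 < ξ) (hσ : σ = (ρ - (ρ₀ + ρ₁)) / ξ)
    (hd : ∀ k, 0 ≤ d k)
    (hrec : ∀ k : ℕ, d (k + 1) ≤ ρ ^ k * ρ₁ * σ + ρ₀ * d k + ξ * d k ^ 2)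
    (h0 : d 0 ≤ σ) :
    ∀ k : ℕ, d k ≤ ρ ^ k * σ := by
  have hσpos : 0 < σ := by
    rw [hσ]
    apply div_pos (by linarith) hξ
  have hξσ : ξ * σ = ρ - (ρ₀ + ρ₁) := by
    rw [hσ]; field_simp
  intro k
  induction k with
  | zero => simpa using h0
  | succ n ih =>
    have hpk : 0 < ρ ^ n := pow_pos hρpos n
    have hpk1 : ρ ^ n ≤ 1 := pow_le_one₀ hρpos.le hρ.le
    have h1 := hrec n
    have hdn := hd n
    have hsub : 0 ≤ ρ ^ n * σ - d n := sub_nonneg.2 ih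
    have hsq : ξ * d n ^ 2 ≤ ξ * (ρ ^ n * σ) * d n := by
      nlinarith [mul_nonneg (mul_nonneg hξ.le hsub) hdn]
    have hsq2 : ξ * (ρ ^ n * σ) * d n ≤ ξ * (ρ ^ n * σ) * (ρ ^ n * σ) := by
      nlinarith [mul_nonneg (mul_nonneg hξ.le hsub) (mul_pos hpk hσpos).le]
    calc d (n + 1) ≤ ρ ^ n * ρ₁ * σ + ρ₀ * d n + ξ * d n ^ 2 := h1
      _ ≤ ρ ^ n * ρ₁ * σ + ρ₀ * (ρ ^ n * σ) + ξ * (ρ ^ n * σ) * (ρ ^ n * σ) := by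
          nlinarith
      _ ≤ ρ ^ (n + 1) * σ := by
          rw [pow_succ]
          have key : ξ * σ * ρ ^ n ≤ ρ - (ρ₀ + ρ₁) := by
            nlinarith [mul_pos hξ hσpos]
          nlinarith [mul_nonneg (mul_pos hpk hσpos).le
            (sub_nonneg.2 key), mul_pos hpk hσpos]
end

section
/- R-linear convergence under a quadratic-plus-offset recursion: let 0 < ρ₀ < ρ < 1 and ξ > 0, and set σ = (ρ − ρ₀)/(2ξ). Suppose a nonnegative sequence dₖ satisfies dₖ₊₁ ≤ ρᵏρ₀σ + ξdₖ² for all k ≥ 0, and d₀ ≤ σ. Then dₖ ≤ ρᵏσ for all k ≥ 0. -/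
/-! Induction on `k`: if `dₖ ≤ ρᵏσ`, then `dₖ₊₁ ≤ ρᵏρ₀σ + ξρ²ᵏσ² ≤ ρᵏ(ρ₀σ + ξσ²) ≤ ρᵏ⁺¹σ`,
using `ρᵏ ≤ 1` and the inequality `ρ₀σ + ξσ² ≤ ρσ`, which the choice `σ = (ρ - ρ₀)/(2ξ)` ensures. -/

theorem le_pow_mul_of_le_pow_mul_add_mul_sq {d : ℕ → ℝ} {ρ ρ₀ ξ σ : ℝ}
    (hρ : 0 ≤ ρ) (hρ₁ : ρ ≤ 1) (hξ : 0 ≤ ξ) (hσ : ρ₀ * σ + ξ * σ ^ 2 ≤ ρ * σ)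
    (hd : ∀ k, 0 ≤ d k) (hrec : ∀ k, d (k + 1) ≤ ρ ^ k * ρ₀ * σ + ξ * d k ^ 2)
    (h0 : d 0 ≤ σ) (k : ℕ) : d k ≤ ρ ^ k * σ := by
  induction k with
  | zero => simpa using h0
  | succ k ih =>
    have hρk : ρ ^ k ≤ 1 := pow_le_one₀ hρ hρ₁
    have hξσ : 0 ≤ ξ * σ ^ 2 := by positivity
    calc d (k + 1) ≤ ρ ^ k * ρ₀ * σ + ξ * d k ^ 2 := hrec k
      _ ≤ ρ ^ k * ρ₀ * σ + ξ * (ρ ^ k * σ) ^ 2 := by gcongr; exact hd k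
      _ = ρ ^ k * (ρ₀ * σ + ρ ^ k * (ξ * σ ^ 2)) := by ring
      _ ≤ ρ ^ k * (ρ₀ * σ + 1 * (ξ * σ ^ 2)) := by gcongr
      _ ≤ ρ ^ k * (ρ * σ) := by gcongr; linarith
      _ = ρ ^ (k + 1) * σ := by ring

theorem mul_add_mul_sq_le_of_eq_div {ρ ρ₀ ξ σ : ℝ} (hρ₀ρ : ρ₀ ≤ ρ) (hξ : 0 ≤ ξ)
    (hσ : σ = (ρ - ρ₀) / (2 * ξ)) : ρ₀ * σ + ξ * σ ^ 2 ≤ ρ * σ := by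
  have hσ0 : 0 ≤ σ := hσ ▸ by positivity
  have hξσ : ξ * σ ≤ ρ - ρ₀ := by
    rcases hξ.eq_or_lt with rfl | hξ
    · simpa using hρ₀ρ
    · have : ξ * σ = (ρ - ρ₀) / 2 := by rw [hσ]; field_simp
      linarith
  calc ρ₀ * σ + ξ * σ ^ 2 = σ * (ρ₀ + ξ * σ) := by ring
    _ ≤ σ * ρ := by gcongr; linarith
    _ = ρ * σ := by ring

/-- R-linear convergence under a quadratic-plus-offset recursion. -/
theorem r_linear_convergence_quadratic_offset (d : ℕ → ℝ) (ρ ρ₀ ξ σ : ℝ)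
    (hρ₀ : 0 < ρ₀) (hρ₀ρ : ρ₀ < ρ) (hρ : ρ < 1) (hξ : 0 < ξ)
    (hσ : σ = (ρ - ρ₀) / (2 * ξ)) (hd : ∀ k, 0 ≤ d k)
    (hrec : ∀ k : ℕ, d (k + 1) ≤ ρ ^ k * ρ₀ * σ + ξ * d k ^ 2)
    (h0 : d 0 ≤ σ) :
    ∀ k : ℕ, d k ≤ ρ ^ k * σ :=
  le_pow_mul_of_le_pow_mul_add_mul_sq (by linarith) hρ.le hξ.le
    (mul_add_mul_sq_le_of_eq_div hρ₀ρ.le hξ.le hσ) hd hrec h0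
end

section
/- R-superlinear convergence under an aggressively decaying recursion: let 0 < ρ₀ < ρ < 1 and ξ > 0, set σ = (ρ − ρ₀)/(2ξ), and define τ₁ = ρ, τₖ = ρᵏ⁻¹τₖ₋₁ for k ≥ 2 (so τₖ = ρ·∏_{i=1}^{k−1} ρⁱ). Suppose a nonnegative sequence dₖ satisfies d₀ ≤ σ and dₖ₊₁ ≤ (∏_{i=1}^{k} ρⁱ)·ρ₀σ + ξdₖ² for all k ≥ 0. Then dₖ ≤ τₖ·σ for all k ≥ 1, and τₖ₊₁/τₖ = ρᵏ → 0, i.e., the convergence is R-superlinear. -/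
/-!
Write `Pₘ = ∏_{i=1}^m ρ^i`, so that `τ_{m+1} = ρ Pₘ` and `P_{m+1} = Pₘ ρ^{m+1}`. Since every factor
of `Pₘ` is at most `ρ`, we have `ρ Pₘ ≤ ρ^{m+1}`, hence `τ_{m+1}² ≤ ρ P_{m+1}`: squaring the current
bound costs no more than one extra factor `ρ` on the next one. With `ξσ = (ρ - ρ₀)/2`, the induction
hypothesis `d_{m+1} ≤ ρ Pₘ σ` and the recursion then give
`d_{m+2} ≤ P_{m+1} σ (ρ₀ + (ρ - ρ₀) ρ / 2) ≤ ρ P_{m+1} σ`.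
-/

open Finset

theorem prod_Icc_pow_succ {M : Type*} [CommMonoid M] (ρ : M) (m : ℕ) :
    ∏ i ∈ Icc 1 (m + 1), ρ ^ i = (∏ i ∈ Icc 1 m, ρ ^ i) * ρ ^ (m + 1) :=
  prod_Icc_succ_top (by omega) _

theorem prod_Icc_pow_le_pow {R : Type*} [CommMonoidWithZero R] [Preorder R] [ZeroLEOneClass R]
    [PosMulMono R] {ρ : R} (h₀ : 0 ≤ ρ) (h₁ : ρ ≤ 1) (m : ℕ) :
    ∏ i ∈ Icc 1 m, ρ ^ i ≤ ρ ^ m := by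
  calc ∏ i ∈ Icc 1 m, ρ ^ i ≤ ∏ _i ∈ Icc 1 m, ρ :=
        prod_le_prod (fun _ _ => pow_nonneg h₀ _)
          (fun i hi => pow_le_of_le_one h₀ h₁ (by grind))
    _ = ρ ^ m := by rw [prod_const, Nat.card_Icc, Nat.add_sub_cancel]

theorem le_mul_prod_Icc_pow_mul_of_le_sq_add {d : ℕ → ℝ} {ρ ρ₀ ξ σ : ℝ}
    (hρ₀ρ : ρ₀ ≤ ρ) (hρ₀ : 0 ≤ ρ) (hρ₁ : ρ ≤ 1) (hξ : 0 ≤ ξ) (hσ : 0 ≤ σ)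
    (hξσ : ξ * σ = (ρ - ρ₀) / 2) (hd : ∀ k, 0 ≤ d k) (h0 : d 0 ≤ σ)
    (hrec : ∀ k, d (k + 1) ≤ (∏ i ∈ Icc 1 k, ρ ^ i) * ρ₀ * σ + ξ * d k ^ 2) (m : ℕ) :
    d (m + 1) ≤ ρ * (∏ i ∈ Icc 1 m, ρ ^ i) * σ := by
  induction m with
  | zero =>
    have hsq : d 0 ^ 2 ≤ σ ^ 2 := pow_le_pow_left₀ (hd 0) h0 2
    have hrec₀ := hrec 0
    simp only [Icc_eq_empty_of_lt, zero_lt_one, prod_empty] at hrec₀ ⊢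
    nlinarith
  | succ m ih =>
    have hrec' := hrec (m + 1)
    rw [prod_Icc_pow_succ] at hrec' ⊢
    set P := ∏ i ∈ Icc 1 m, ρ ^ i
    have hP : 0 ≤ P := prod_nonneg fun _ _ => pow_nonneg hρ₀ _
    have hτ : ρ * P ≤ ρ ^ (m + 1) := by
      rw [pow_succ']
      exact mul_le_mul_of_nonneg_left (prod_Icc_pow_le_pow hρ₀ hρ₁ m) hρ₀
    have hτsq : (ρ * P) ^ 2 ≤ ρ * (P * ρ ^ (m + 1)) :=
      calc (ρ * P) ^ 2 = (ρ * P) * (ρ * P) := sq _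
        _ ≤ (ρ * P) * ρ ^ (m + 1) := mul_le_mul_of_nonneg_left hτ (by positivity)
        _ = ρ * (P * ρ ^ (m + 1)) := by ring
    have hquad : ξ * d (m + 1) ^ 2 ≤ (ρ - ρ₀) / 2 * (ρ * (P * ρ ^ (m + 1))) * σ :=
      calc ξ * d (m + 1) ^ 2 ≤ ξ * (ρ * P * σ) ^ 2 :=
            mul_le_mul_of_nonneg_left (pow_le_pow_left₀ (hd _) ih 2) hξ
        _ = ξ * σ * (ρ * P) ^ 2 * σ := by ring
        _ ≤ _ := by rw [hξσ]; gcongr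
    have hslack : 0 ≤ P * ρ ^ (m + 1) * σ * ((ρ - ρ₀) * (1 - ρ / 2)) := by
      have : 0 ≤ ρ - ρ₀ := by linarith
      have : 0 ≤ 1 - ρ / 2 := by linarith
      positivity
    nlinarith

/-- R-superlinear convergence under an aggressively decaying recursion. -/
theorem r_superlinear_convergence (d : ℕ → ℝ) (ρ ρ₀ ξ σ : ℝ) (τ : ℕ → ℝ)
    (hρ₀ : 0 < ρ₀) (hρ₀ρ : ρ₀ < ρ) (hρ : ρ < 1) (hξ : 0 < ξ)
    (hσ : σ = (ρ - ρ₀) / (2 * ξ))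
    (hτ : ∀ k : ℕ, τ k = ρ * ∏ i ∈ Finset.Icc 1 (k - 1), ρ ^ i)
    (hd : ∀ k, 0 ≤ d k) (h0 : d 0 ≤ σ)
    (hrec : ∀ k : ℕ, d (k + 1) ≤ (∏ i ∈ Finset.Icc 1 k, ρ ^ i) * ρ₀ * σ + ξ * d k ^ 2) :
    (∀ k : ℕ, 1 ≤ k → d k ≤ τ k * σ) ∧
    (∀ k : ℕ, 1 ≤ k → τ (k + 1) / τ k = ρ ^ k) ∧
    Filter.Tendsto (fun k : ℕ => ρ ^ k) Filter.atTop (nhds 0) := by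
  have hρpos : 0 < ρ := hρ₀.trans hρ₀ρ
  have hσnonneg : 0 ≤ σ := hσ ▸ div_nonneg (by linarith) (by linarith)
  have hξσ : ξ * σ = (ρ - ρ₀) / 2 := by rw [hσ]; field_simp
  have hτ_succ : ∀ m, τ (m + 1) = ρ * ∏ i ∈ Icc 1 m, ρ ^ i := fun m => by
    rw [hτ, Nat.add_sub_cancel]
  refine ⟨fun k hk => ?_, fun k hk => ?_, tendsto_pow_atTop_nhds_zero_of_lt_one hρpos.le hρ⟩
  · obtain ⟨m, rfl⟩ := Nat.exists_eq_add_of_le' hk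
    rw [hτ_succ]
    exact le_mul_prod_Icc_pow_mul_of_le_sq_add hρ₀ρ.le hρpos.le hρ.le hξ.le hσnonneg hξσ hd h0
      hrec m
  · obtain ⟨m, rfl⟩ := Nat.exists_eq_add_of_le' hk
    rw [hτ_succ, hτ_succ, prod_Icc_pow_succ, ← mul_assoc]
    exact mul_div_cancel_left₀ _ (by positivity)
end

section
/- Structural lemma with sub-sampled gradient and Jacobian matching: let F be twice continuously differentiable on open convex D ⊇ X with x* ∈ X satisfying ⟨∇F(x*), z − x*⟩ ≥ 0 for z ∈ X. Let g : D → ℝᵖ be differentiable with Jacobian J_g, and let H : D → Sym(p) satisfy ‖H(u) − J_g(v)‖ ≤ T‖u − v‖ for u, v ∈ D, with λ_min(H(x*)) = μ* > 0 and ‖H(u) − H(x*)‖ ≤ Γ‖u − x*‖. If ‖x − x*‖ ≤ μ*/(2Γ) and x⁺ = argmin over X of ⟨g(x), z − x⟩ + ½(z − x)ᵀ H(x)(z − x), then ‖x⁺ − x*‖ ≤ 2‖∇F(x*) − g(x*)‖/μ* + (T/μ*)·‖x − x*‖². -/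
/-!
Put `e = x⁺ - x*` and `w = g x - g x* - H(x)(x - x*)`. Testing the variational inequality of `x⁺`
at `x*` and that of `x*` at `x⁺` gives `⟪e, H(x) e⟫ ≤ ⟪∇F(x*) - g(x*) - w, e⟫`. Jacobian matching
makes `w` a second-order Taylor remainder, `‖w‖ ≤ (T/2)‖x - x*‖²`, and `‖x - x*‖ ≤ μ*/(2Γ)` keeps
`H(x)` coercive with constant `μ*/2`; dividing by `‖e‖` gives the bound.
-/

open scoped RealInnerProductSpace

open Set

section Taylor

variable {E F : Type*} [NormedAddCommGroup E] [NormedSpace ℝ E]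
  [NormedAddCommGroup F] [NormedSpace ℝ F]

theorem norm_sub_sub_apply_le_of_norm_sub_fderiv_le {g : E → F} {J : E → E →L[ℝ] F}
    {A : E →L[ℝ] F} {a b : E} {T : ℝ}
    (hg : ∀ y ∈ segment ℝ a b, HasFDerivAt g (J y) y)
    (hJ : ∀ y ∈ segment ℝ a b, ‖A - J y‖ ≤ T * ‖b - y‖) :
    ‖g b - g a - A (b - a)‖ ≤ T / 2 * ‖b - a‖ ^ 2 := by
  set d := b - a
  have hmem : ∀ t ∈ Icc (0 : ℝ) 1, a + t • d ∈ segment ℝ a b := fun t ht =>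
    segment_eq_image' ℝ a b ▸ mem_image_of_mem _ ht
  have hderiv : ∀ t ∈ Icc (0 : ℝ) 1,
      HasDerivAt (fun s : ℝ => g (a + s • d) - g a - s • A d) (J (a + t • d) d - A d) t := by
    intro t ht
    have hline : HasDerivAt (fun s : ℝ => a + s • d) d t := by
      simpa using ((hasDerivAt_id t).smul_const d).const_add a
    have := (((hg _ (hmem t ht)).comp_hasDerivAt t hline).sub_const (g a)).sub
      ((hasDerivAt_id t).smul_const (A d))
    rwa [one_smul] at this
  have hbound : ∀ t ∈ Ico (0 : ℝ) 1, ‖J (a + t • d) d - A d‖ ≤ T * ‖d‖ ^ 2 * (1 - t) := by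
    intro t ht
    have hrest : b - (a + t • d) = (1 - t) • d := by simp only [d]; module
    calc ‖J (a + t • d) d - A d‖ = ‖(A - J (a + t • d)) d‖ := by
          rw [← norm_neg]; simp
      _ ≤ ‖A - J (a + t • d)‖ * ‖d‖ := ContinuousLinearMap.le_opNorm _ _
      _ ≤ T * ‖b - (a + t • d)‖ * ‖d‖ := by
          gcongr; exact hJ _ (hmem t (Ico_subset_Icc_self ht))
      _ = T * ‖d‖ ^ 2 * (1 - t) := by
          rw [hrest, norm_smul, Real.norm_of_nonneg (by linarith [ht.2])]; ring
  -- `B t = T‖d‖²(t - t²/2)` plays the role of `∫₀ᵗ T‖d‖²(1 - s) ds`, and `B 1 = T‖d‖²/2`.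
  have hfence := image_norm_le_of_norm_deriv_right_le_deriv_boundary
    (fun t ht => (hderiv t ht).continuousAt.continuousWithinAt)
    (fun t ht => (hderiv t (Ico_subset_Icc_self ht)).hasDerivWithinAt)
    (B := fun t => T * ‖d‖ ^ 2 * (t - t ^ 2 / 2)) (by simp)
    (fun t => by
      simpa using ((hasDerivAt_id t).sub ((hasDerivAt_pow 2 t).div_const 2)).const_mul
        (T * ‖d‖ ^ 2))
    hbound (right_mem_Icc.2 zero_le_one)
  convert hfence using 1 <;> simp [d]; ring

end Taylor

section InnerProduct

variable {E : Type*} [NormedAddCommGroup E] [InnerProductSpace ℝ E]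

theorem inner_sub_apply_sub_le_of_variationalInequalities {X : Set E} {A : E →L[ℝ] E}
    {q G x xstar xplus : E} (hxstar : xstar ∈ X) (hxplus : xplus ∈ X)
    (hVIstar : ∀ z ∈ X, 0 ≤ ⟪G, z - xstar⟫)
    (hVI : ∀ z ∈ X, 0 ≤ ⟪q + A (xplus - x), z - xplus⟫) :
    ⟪xplus - xstar, A (xplus - xstar)⟫ ≤ ⟪A (x - xstar) - q + G, xplus - xstar⟫ := by
  have hplus := hVI xstar hxstar
  have hstar := hVIstar xplus hxplus
  have hsplit : xplus - x = (xplus - xstar) - (x - xstar) := by abel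
  have hswap : xstar - xplus = -(xplus - xstar) := by abel
  rw [hsplit, map_sub, hswap, inner_neg_right] at hplus
  rw [real_inner_comm]
  simp only [inner_add_left, inner_sub_left] at hplus ⊢
  linarith

theorem sub_mul_norm_sq_le_inner_apply_self {A B : E →L[ℝ] E} {μ δ : ℝ} {v : E}
    (hB : μ * ‖v‖ ^ 2 ≤ ⟪v, B v⟫) (hAB : ‖A - B‖ ≤ δ) :
    (μ - δ) * ‖v‖ ^ 2 ≤ ⟪v, A v⟫ := by
  have hdiff : ⟪v, B v⟫ - ⟪v, A v⟫ ≤ δ * ‖v‖ ^ 2 :=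
    calc ⟪v, B v⟫ - ⟪v, A v⟫ = ⟪v, (B - A) v⟫ := by
          rw [sub_apply, inner_sub_right]
      _ ≤ ‖v‖ * ‖(B - A) v‖ := real_inner_le_norm _ _
      _ ≤ ‖v‖ * (‖B - A‖ * ‖v‖) := by gcongr; exact ContinuousLinearMap.le_opNorm _ _
      _ ≤ δ * ‖v‖ ^ 2 := by
          rw [norm_sub_rev]
          nlinarith [norm_nonneg v, sq_nonneg ‖v‖]
  linarith

end InnerProduct

theorem structural_error_recursion_jacobian_matching_general {p : ℕ}
    (D X : Set (EuclideanSpace ℝ (Fin p)))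
    (hDconv : Convex ℝ D) (hXD : X ⊆ D)
    (gradF : EuclideanSpace ℝ (Fin p) → EuclideanSpace ℝ (Fin p))
    (g : EuclideanSpace ℝ (Fin p) → EuclideanSpace ℝ (Fin p))
    (Jg : EuclideanSpace ℝ (Fin p) →
      (EuclideanSpace ℝ (Fin p) →L[ℝ] EuclideanSpace ℝ (Fin p)))
    (hJg : ∀ u ∈ D, HasFDerivAt g (Jg u) u)
    (xstar x xplus : EuclideanSpace ℝ (Fin p))
    (hxstarX : xstar ∈ X) (hxX : x ∈ X) (hxplusX : xplus ∈ X)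
    (hVIstar : ∀ z ∈ X, 0 ≤ ⟪gradF xstar, z - xstar⟫)
    (T Γ μs : ℝ) (hΓ : 0 < Γ) (hμs : 0 < μs)
    (Hmap : EuclideanSpace ℝ (Fin p) →
      (EuclideanSpace ℝ (Fin p) →L[ℝ] EuclideanSpace ℝ (Fin p)))
    (hHJ : ∀ u ∈ D, ∀ v ∈ D, ‖Hmap u - Jg v‖ ≤ T * ‖u - v‖)
    (hHlip : ∀ u ∈ D, ‖Hmap u - Hmap xstar‖ ≤ Γ * ‖u - xstar‖)
    (hHmin : ∀ v, μs * ‖v‖ ^ 2 ≤ ⟪v, Hmap xstar v⟫)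
    (hclose : ‖x - xstar‖ ≤ μs / (2 * Γ))
    (hVI : ∀ z ∈ X, 0 ≤ ⟪g x + Hmap x (xplus - x), z - xplus⟫) :
    ‖xplus - xstar‖ ≤
      2 * ‖gradF xstar - g xstar‖ / μs + (T / μs) * ‖x - xstar‖ ^ 2 := by
  have hxD : x ∈ D := hXD hxX
  have hsegD : segment ℝ xstar x ⊆ D := hDconv.segment_subset (hXD hxstarX) hxD
  have hTaylor := norm_sub_sub_apply_le_of_norm_sub_fderiv_le (A := Hmap x)
    (fun y hy => hJg y (hsegD hy)) (fun y hy => hHJ x hxD y (hsegD hy))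
  set c := gradF xstar - g xstar
  set w := g x - g xstar - Hmap x (x - xstar)
  set e := xplus - xstar
  have hupper : ⟪e, Hmap x e⟫ ≤ (‖c‖ + ‖w‖) * ‖e‖ :=
    calc ⟪e, Hmap x e⟫ ≤ ⟪Hmap x (x - xstar) - g x + gradF xstar, e⟫ :=
          inner_sub_apply_sub_le_of_variationalInequalities hxstarX hxplusX hVIstar hVI
      _ = ⟪c - w, e⟫ := by congr 1; simp only [c, w]; abel
      _ ≤ ‖c - w‖ * ‖e‖ := real_inner_le_norm _ _
      _ ≤ (‖c‖ + ‖w‖) * ‖e‖ := by gcongr; exact norm_sub_le _ _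
  have hlower : μs / 2 * ‖e‖ ^ 2 ≤ ⟪e, Hmap x e⟫ := by
    have hδ : Γ * ‖x - xstar‖ ≤ μs / 2 := by
      rw [le_div_iff₀ (by positivity)] at hclose
      linarith
    calc μs / 2 * ‖e‖ ^ 2 ≤ (μs - Γ * ‖x - xstar‖) * ‖e‖ ^ 2 := by gcongr; linarith
      _ ≤ ⟪e, Hmap x e⟫ := sub_mul_norm_sq_le_inner_apply_self (hHmin e) (hHlip x hxD)
  have he : ‖e‖ ≤ 2 * (‖c‖ + ‖w‖) / μs := by
    rw [le_div_iff₀ hμs]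
    nlinarith [norm_nonneg e, norm_nonneg w, norm_nonneg c]
  calc ‖e‖ ≤ 2 * (‖c‖ + ‖w‖) / μs := he
    _ ≤ (2 * ‖c‖ + T * ‖x - xstar‖ ^ 2) / μs := by gcongr ?_ / _; linarith
    _ = 2 * ‖c‖ / μs + (T / μs) * ‖x - xstar‖ ^ 2 := by ring

/-- Structural lemma with sub-sampled gradient and Jacobian matching: the approximate
gradient `g` has Jacobian `J_g` close to the scaling matrix `H(·)` in the sense
`‖H(u) − J_g(v)‖ ≤ T‖u − v‖`. -/
theorem structural_error_recursion_jacobian_matching {p : ℕ}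
    (D X : Set (EuclideanSpace ℝ (Fin p)))
    (hD : IsOpen D) (hDconv : Convex ℝ D) (hXconv : Convex ℝ X) (hXD : X ⊆ D)
    (F : EuclideanSpace ℝ (Fin p) → ℝ)
    (gradF : EuclideanSpace ℝ (Fin p) → EuclideanSpace ℝ (Fin p))
    (hessF : EuclideanSpace ℝ (Fin p) →
      (EuclideanSpace ℝ (Fin p) →L[ℝ] EuclideanSpace ℝ (Fin p)))
    (hgrad : ∀ u ∈ D, HasGradientAt F (gradF u) u)
    (hhess : ∀ u ∈ D, HasFDerivAt gradF (hessF u) u)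
    (hhessCont : ContinuousOn hessF D)
    (g : EuclideanSpace ℝ (Fin p) → EuclideanSpace ℝ (Fin p))
    (Jg : EuclideanSpace ℝ (Fin p) →
      (EuclideanSpace ℝ (Fin p) →L[ℝ] EuclideanSpace ℝ (Fin p)))
    (hJg : ∀ u ∈ D, HasFDerivAt g (Jg u) u)
    (xstar x xplus : EuclideanSpace ℝ (Fin p))
    (hxstarX : xstar ∈ X) (hxX : x ∈ X) (hxplusX : xplus ∈ X)
    (hVIstar : ∀ z ∈ X, 0 ≤ ⟪gradF xstar, z - xstar⟫)
    (T Γ μs : ℝ) (hT : 0 ≤ T) (hΓ : 0 < Γ) (hμs : 0 < μs)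
    (Hmap : EuclideanSpace ℝ (Fin p) →
      (EuclideanSpace ℝ (Fin p) →L[ℝ] EuclideanSpace ℝ (Fin p)))
    (hHsym : ∀ u ∈ D, ∀ a b, ⟪Hmap u a, b⟫ = ⟪a, Hmap u b⟫)
    (hHJ : ∀ u ∈ D, ∀ v ∈ D, ‖Hmap u - Jg v‖ ≤ T * ‖u - v‖)
    (hHlip : ∀ u ∈ D, ‖Hmap u - Hmap xstar‖ ≤ Γ * ‖u - xstar‖)
    (hHmin : ∀ v, μs * ‖v‖ ^ 2 ≤ ⟪v, Hmap xstar v⟫)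
    (hclose : ‖x - xstar‖ ≤ μs / (2 * Γ))
    (hVI : ∀ z ∈ X, 0 ≤ ⟪g x + Hmap x (xplus - x), z - xplus⟫) :
    ‖xplus - xstar‖ ≤
      2 * ‖gradF xstar - g xstar‖ / μs + (T / μs) * ‖x - xstar‖ ^ 2 :=
  structural_error_recursion_jacobian_matching_general D X hDconv hXD gradF g Jg hJg xstar x xplus
    hxstarX hxX hxplusX hVIstar T Γ μs hΓ hμs Hmap hHJ hHlip hHmin hclose hVI
end
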